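/- Let (V, w) be a connected finite electrical network, let x₀, y₀ ∈ V be two distinct vertices with w(x₀,y₀) > 0, and let R be the effective resistance associated with (V, w). For x ≠ y define the contracted resistance R'(x,y) = (inf{E_w(f,f) : f : V → ℝ, f(x) = 1, f(y) = 0, f(x₀) = f(y₀)})^{-1} (which is the effective resistance of the network obtained from (V, w) by contracting the edge (x₀,y₀) to a single vertex). Then R(x,y) ≤ R'(x,y) + 1/w(x₀,y₀) for all x, y ∈ V. -/

import Mathlib

open scoped Classical

/-- An edge conductance function on a set `V`: nonnegative, symmetric, vanishing on the
diagonal. -/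
def IsConductance {V : Type*} (w : V → V → ℝ) : Prop :=
  (∀ x y, 0 ≤ w x y) ∧ (∀ x y, w x y = w y x) ∧ (∀ x, w x x = 0)

/-- The energy of a function `f : V → ℝ` with respect to edge conductances `w`. -/
noncomputable def energy {V : Type*} [Fintype V] (w : V → V → ℝ) (f : V → ℝ) : ℝ :=
  (1 / 2) * ∑ x, ∑ y, w x y * (f x - f y) ^ 2

/-- The network `(V, w)` is connected. -/
def NetworkConnected {V : Type*} (w : V → V → ℝ) : Prop :=
  ∀ x y : V, Relation.ReflTransGen (fun a b => 0 < w a b) x y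

/-- The effective resistance associated with the network `(V, w)`. -/
noncomputable def effRes {V : Type*} [Fintype V] (w : V → V → ℝ) (x y : V) : ℝ :=
  if x = y then 0
  else (sInf {e : ℝ | ∃ f : V → ℝ, f x = 1 ∧ f y = 0 ∧ energy w f = e})⁻¹

/-!
Let `u` be an energy minimiser among unit potentials from `x₀` to `y₀`; clamping shows it can be
taken with values in `[0, 1]`. Minimality makes `u` energy-orthogonal to every function that is
constant on `{x₀, y₀}`, so a unit potential `f` from `x` to `y` splits as `f = g + t u` with
`t = f x₀ - f y₀`, `g x₀ = g y₀` and `E f = E g + t² E u`. Now `E g ≥ C' (g x - g y)²` where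
`C' = 1 / R'(x, y)`, `E u ≥ w(x₀, y₀)`, and `(g x - g y) + t (u x - u y) = 1` with
`|u x - u y| ≤ 1`; Cauchy–Schwarz gives `E f ≥ (1 / C' + 1 / w(x₀, y₀))⁻¹`. Connectivity is
what makes `C' > 0`.
-/

open Set

lemma inv_add_inv_inv_le_of_add_mul_eq_one {m c a t d : ℝ} (hm : 0 < m) (hc : 0 < c)
    (hd : d ^ 2 ≤ 1) (h : a + t * d = 1) : (m⁻¹ + c⁻¹)⁻¹ ≤ m * a ^ 2 + c * t ^ 2 := by
  have hinv : (m⁻¹ + c⁻¹)⁻¹ = m * c / (m + c) := by field_simp; ring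
  obtain rfl : a = 1 - t * d := by linarith
  rw [hinv, div_le_iff₀ (by positivity)]
  nlinarith [sq_nonneg (m * (1 - t * d) - c * t * d),
    mul_nonneg (mul_nonneg hc.le (add_pos hm hc).le) (mul_nonneg (sq_nonneg t) (sub_nonneg.2 hd))]

section Energy

variable {V : Type*} [Fintype V] {w : V → V → ℝ}

noncomputable def energyForm (w : V → V → ℝ) (g h : V → ℝ) : ℝ :=
  (1 / 2) * ∑ x, ∑ y, w x y * (g x - g y) * (h x - h y)

lemma energy_nonneg (hw : ∀ x y, 0 ≤ w x y) (f : V → ℝ) : 0 ≤ energy w f :=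
  mul_nonneg (by norm_num) <| Finset.sum_nonneg fun x _ => Finset.sum_nonneg fun y _ =>
    mul_nonneg (hw x y) (sq_nonneg _)

lemma energy_add_mul (w : V → V → ℝ) (g h : V → ℝ) (t : ℝ) :
    energy w (fun a => g a + t * h a) =
      energy w g + 2 * t * energyForm w g h + t ^ 2 * energy w h := by
  have key : ∀ x y : V, w x y * ((g x + t * h x) - (g y + t * h y)) ^ 2 =
      w x y * (g x - g y) ^ 2 + 2 * t * (w x y * (g x - g y) * (h x - h y))
        + t ^ 2 * (w x y * (h x - h y) ^ 2) := fun x y => by ring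
  simp_rw [energy, energyForm, key, Finset.sum_add_distrib, ← Finset.mul_sum]
  ring

lemma energy_mul_add_const (w : V → V → ℝ) (g : V → ℝ) (c k : ℝ) :
    energy w (fun a => c * g a + k) = c ^ 2 * energy w g := by
  have key : ∀ x y : V, w x y * ((c * g x + k) - (c * g y + k)) ^ 2 =
      c ^ 2 * (w x y * (g x - g y) ^ 2) := fun x y => by ring
  simp_rw [energy, key, ← Finset.mul_sum]
  ring

lemma energyForm_comm (w : V → V → ℝ) (g h : V → ℝ) :
    energyForm w g h = energyForm w h g := by
  simp_rw [energyForm, mul_assoc, mul_comm (g _ - g _)]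

lemma energyForm_sub_const (w : V → V → ℝ) (g h : V → ℝ) (c : ℝ) :
    energyForm w g (fun a => h a - c) = energyForm w g h := by
  simp [energyForm]

lemma continuous_energy (w : V → V → ℝ) : Continuous (energy w) := by
  unfold energy
  fun_prop

lemma mul_sq_sub_le_energy (hw : IsConductance w) (f : V → ℝ) (a b : V) :
    w a b * (f a - f b) ^ 2 ≤ energy w f := by
  obtain ⟨hnn, hsymm, -⟩ := hw
  rcases eq_or_ne a b with rfl | hab
  · simpa using energy_nonneg hnn f
  have hpair : ((a, b) : V × V) ≠ (b, a) := by simp [hab]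
  have hsub := Finset.sum_le_sum_of_subset_of_nonneg (Finset.subset_univ {(a, b), (b, a)})
    (f := fun p : V × V => w p.1 p.2 * (f p.1 - f p.2) ^ 2)
    fun p _ _ => mul_nonneg (hnn _ _) (sq_nonneg _)
  rw [Finset.sum_pair hpair, ← Finset.univ_product_univ, Finset.sum_product] at hsub
  have hba : w b a * (f b - f a) ^ 2 = w a b * (f a - f b) ^ 2 := by rw [hsymm]; ring
  rw [energy]
  linarith

lemma exists_pos_mul_sq_sub_le_energy (hw : IsConductance w) (hconn : NetworkConnected w)
    (x y : V) : ∃ δ > 0, ∀ f : V → ℝ, δ * (f x - f y) ^ 2 ≤ energy w f := by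
  induction hconn x y with
  | refl => exact ⟨1, one_pos, fun f => by simpa using energy_nonneg hw.1 f⟩
  | @tail b c _ hbc ih =>
    obtain ⟨δ, hδ, hδf⟩ := ih
    set μ := min δ (w b c)
    have hμ : 0 ≤ μ := le_min hδ.le hbc.le
    refine ⟨μ / 4, by positivity, fun f => ?_⟩
    have hxb : μ * (f x - f b) ^ 2 ≤ energy w f :=
      (mul_le_mul_of_nonneg_right (min_le_left _ _) (sq_nonneg _)).trans (hδf f)
    have hbc : μ * (f b - f c) ^ 2 ≤ energy w f :=
      (mul_le_mul_of_nonneg_right (min_le_right _ _) (sq_nonneg _)).trans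
        (mul_sq_sub_le_energy hw f b c)
    nlinarith [mul_nonneg hμ (sq_nonneg (f x - 2 * f b + f c))]

lemma energy_projIcc_le (hw : ∀ x y, 0 ≤ w x y) (f : V → ℝ) :
    energy w (fun a => (projIcc 0 1 zero_le_one (f a) : ℝ)) ≤ energy w f := by
  unfold energy
  gcongr _ * ∑ x, ∑ y, ?_ * ?_ with x _ y _
  · exact hw x y
  · exact sq_le_sq.2 (by simpa using abs_projIcc_sub_projIcc (zero_le_one' ℝ))

end Energy

section EquilibriumPotential

variable {V : Type*} [Fintype V] {w : V → V → ℝ} {a b : V} {u : V → ℝ}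

def IsEquilibriumPotential (w : V → V → ℝ) (a b : V) (u : V → ℝ) : Prop :=
  u a = 1 ∧ u b = 0 ∧ ∀ f : V → ℝ, f a = 1 → f b = 0 → energy w u ≤ energy w f

lemma exists_isEquilibriumPotential (hw : ∀ x y, 0 ≤ w x y) (hab : a ≠ b) :
    ∃ u, IsEquilibriumPotential w a b u ∧ ∀ v, u v ∈ Icc (0 : ℝ) 1 := by
  set K : Set (V → ℝ) := (univ.pi fun _ => Icc 0 1) ∩ ({u | u a = 1} ∩ {u | u b = 0})
  have hK : IsCompact K := (isCompact_univ_pi fun _ => isCompact_Icc).inter_right <|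
    (isClosed_eq (continuous_apply a) continuous_const).inter
      (isClosed_eq (continuous_apply b) continuous_const)
  -- clamping to `[0, 1]` keeps the boundary values and does not increase the energy
  have hclamp : ∀ f : V → ℝ, f a = 1 → f b = 0 →
      (fun v => (projIcc 0 1 zero_le_one (f v) : ℝ)) ∈ K := fun f hf1 hf0 =>
    ⟨fun v _ => Subtype.prop _, by simp [hf1], by simp [hf0]⟩
  obtain ⟨u, ⟨huI, hu1, hu0⟩, hmin⟩ := hK.exists_isMinOn
    ⟨_, hclamp (Pi.single a 1) (by simp) (by simp [hab.symm])⟩ (continuous_energy w).continuousOn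
  exact ⟨u, ⟨hu1, hu0, fun f hf1 hf0 => (hmin (hclamp f hf1 hf0)).trans (energy_projIcc_le hw f)⟩,
    fun v => huI v (mem_univ v)⟩

lemma IsEquilibriumPotential.energyForm_eq_zero (hu : IsEquilibriumPotential w a b u)
    {h : V → ℝ} (hab : h a = h b) : energyForm w u h = 0 := by
  obtain ⟨hu1, hu0, hmin⟩ := hu
  have hquad : ∀ t : ℝ,
      0 ≤ energy w (fun v => h v - h a) * (t * t) + 2 * energyForm w u h * t + 0 := by
    intro t
    have := hmin (fun v => u v + t * (h v - h a)) (by simp [hu1]) (by simp [hu0, hab])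
    rw [energy_add_mul, energyForm_sub_const] at this
    linarith
  have := discrim_le_zero hquad
  rw [discrim] at this
  nlinarith [sq_nonneg (energyForm w u h)]

lemma IsEquilibriumPotential.energy_eq (hu : IsEquilibriumPotential w a b u) (f : V → ℝ) :
    energy w f = energy w (fun v => f v - (f a - f b) * u v) + (f a - f b) ^ 2 * energy w u := by
  set t := f a - f b
  set g := fun v => f v - t * u v
  have hg : g a = g b := by simp only [g, t, hu.1, hu.2.1]; ring
  have hf : f = fun v => g v + t * u v := by funext v; simp only [g]; ring
  conv_lhs => rw [hf]
  rw [energy_add_mul, energyForm_comm, hu.energyForm_eq_zero hg]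
  ring

end EquilibriumPotential

section EffectiveConductance

variable {V : Type*} [Fintype V] {w : V → V → ℝ} {x₀ y₀ x y : V}

noncomputable def effCond (w : V → V → ℝ) (x y : V) : ℝ :=
  sInf {e : ℝ | ∃ f : V → ℝ, f x = 1 ∧ f y = 0 ∧ energy w f = e}

noncomputable def effCondContracted (w : V → V → ℝ) (x₀ y₀ x y : V) : ℝ :=
  sInf {e : ℝ | ∃ f : V → ℝ, f x = 1 ∧ f y = 0 ∧ f x₀ = f y₀ ∧ energy w f = e}

lemma effRes_eq_inv_effCond (hxy : x ≠ y) : effRes w x y = (effCond w x y)⁻¹ :=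
  if_neg hxy

lemma le_effCond {c : ℝ} (hxy : x ≠ y) (h : ∀ f : V → ℝ, f x = 1 → f y = 0 → c ≤ energy w f) :
    c ≤ effCond w x y :=
  le_csInf ⟨_, Pi.single x 1, by simp, by simp [hxy.symm], rfl⟩ fun _ ⟨f, hf1, hf0, he⟩ =>
    he ▸ h f hf1 hf0

lemma le_effCond_of_mem_pair (hw : IsConductance w) (hxy : x ≠ y)
    (hx : x ∈ ({x₀, y₀} : Set V)) (hy : y ∈ ({x₀, y₀} : Set V)) : w x₀ y₀ ≤ effCond w x y := by
  refine le_effCond hxy fun f hf1 hf0 => ?_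
  have hsq : (f x₀ - f y₀) ^ 2 = 1 := by
    simp only [mem_insert_iff, mem_singleton_iff] at hx hy
    rcases hx with rfl | rfl <;> rcases hy with rfl | rfl <;> simp_all
  simpa [hsq] using mul_sq_sub_le_energy hw f x₀ y₀

lemma effCondContracted_nonneg (hw : ∀ x y, 0 ≤ w x y) : 0 ≤ effCondContracted w x₀ y₀ x y :=
  Real.sInf_nonneg fun _ ⟨f, _, _, _, he⟩ => he ▸ energy_nonneg hw f

lemma effCondContracted_mul_sq_sub_le_energy (hw : ∀ x y, 0 ≤ w x y) {g : V → ℝ}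
    (hg : g x₀ = g y₀) : effCondContracted w x₀ y₀ x y * (g x - g y) ^ 2 ≤ energy w g := by
  set d := g x - g y
  rcases eq_or_ne d 0 with hd | hd
  · simpa [hd] using energy_nonneg hw g
  have hle : effCondContracted w x₀ y₀ x y ≤ energy w (fun v => d⁻¹ * g v + -d⁻¹ * g y) :=
    csInf_le ⟨0, fun _ ⟨f, _, _, _, he⟩ => he ▸ energy_nonneg hw f⟩
      ⟨_, by field_simp; ring, by ring, by rw [hg], rfl⟩
  rw [energy_mul_add_const, inv_pow, inv_mul_eq_div] at hle
  rwa [← le_div_iff₀ (by positivity)]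

lemma effCondContracted_pos (hw : IsConductance w) (hconn : NetworkConnected w) (hxy : x ≠ y)
    (hpair : ¬(x ∈ ({x₀, y₀} : Set V) ∧ y ∈ ({x₀, y₀} : Set V))) :
    0 < effCondContracted w x₀ y₀ x y := by
  obtain ⟨δ, hδ, hδf⟩ := exists_pos_mul_sq_sub_le_energy hw hconn x y
  set P : Set V := {x₀, y₀}
  refine hδ.trans_le (le_csInf ⟨_, fun v => if v = x ∨ (x ∈ P ∧ v ∈ P) then 1 else 0,
    by simp, by simp_all [hxy.symm], ?_, rfl⟩ ?_)
  · simp only [P, mem_insert_iff, mem_singleton_iff]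
    exact if_congr (by tauto) rfl rfl
  rintro _ ⟨f, hf1, hf0, -, rfl⟩
  simpa [hf1, hf0] using hδf f

lemma inv_add_inv_inv_le_effCond (hw : IsConductance w) (hne : x₀ ≠ y₀) (hpos : 0 < w x₀ y₀)
    (hxy : x ≠ y) (hm : 0 < effCondContracted w x₀ y₀ x y) :
    ((effCondContracted w x₀ y₀ x y)⁻¹ + (w x₀ y₀)⁻¹)⁻¹ ≤ effCond w x y := by
  obtain ⟨u, hu, huI⟩ := exists_isEquilibriumPotential hw.1 hne
  refine le_effCond hxy fun f hf1 hf0 => ?_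
  set t := f x₀ - f y₀
  set g := fun v => f v - t * u v
  have hg : g x₀ = g y₀ := by simp only [g, t, hu.1, hu.2.1]; ring
  have hsum : (g x - g y) + t * (u x - u y) = 1 := by simp only [g, hf1, hf0]; ring
  have hd : (u x - u y) ^ 2 ≤ 1 := by
    obtain ⟨hx0, hx1⟩ := huI x
    obtain ⟨hy0, hy1⟩ := huI y
    rw [sq_le_one_iff_abs_le_one, abs_le]
    constructor <;> linarith
  have hEu : w x₀ y₀ ≤ energy w u := by
    simpa [hu.1, hu.2.1] using mul_sq_sub_le_energy hw u x₀ y₀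
  calc _ ≤ effCondContracted w x₀ y₀ x y * (g x - g y) ^ 2 + w x₀ y₀ * t ^ 2 :=
        inv_add_inv_inv_le_of_add_mul_eq_one hm hpos hd hsum
    _ ≤ energy w g + t ^ 2 * energy w u :=
        add_le_add (effCondContracted_mul_sq_sub_le_energy hw.1 hg)
          (by rw [mul_comm]; gcongr)
    _ = energy w f := (hu.energy_eq f).symm

end EffectiveConductance

/-- Contracting the edge `(x₀, y₀)` (with positive conductance) to a single vertex decreases the
effective resistance by at most `1 / w(x₀, y₀)`: here `R'` is the effective resistance of the
contracted network, defined directly via the energy minimization with the extra constraint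
`f(x₀) = f(y₀)`. -/
theorem effRes_contraction {V : Type*} [Fintype V] (w : V → V → ℝ) (hw : IsConductance w)
    (hconn : NetworkConnected w)
    (x₀ y₀ : V) (hne : x₀ ≠ y₀) (hpos : 0 < w x₀ y₀)
    (R' : V → V → ℝ)
    (hR' : ∀ x y, x ≠ y → R' x y =
      (sInf {e : ℝ | ∃ f : V → ℝ, f x = 1 ∧ f y = 0 ∧ f x₀ = f y₀ ∧ energy w f = e})⁻¹)
    (hR'diag : ∀ x, R' x x = 0) :
    ∀ x y, effRes w x y ≤ R' x y + 1 / w x₀ y₀ := by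
  intro x y
  rcases eq_or_ne x y with rfl | hxy
  · rw [hR'diag, effRes, if_pos rfl, zero_add]
    positivity
  have hR'xy : R' x y = (effCondContracted w x₀ y₀ x y)⁻¹ := hR' x y hxy
  rw [effRes_eq_inv_effCond hxy, hR'xy, one_div]
  by_cases hpair : x ∈ ({x₀, y₀} : Set V) ∧ y ∈ ({x₀, y₀} : Set V)
  · -- the constraints defining `R' x y` are contradictory here (`R' x y = 0⁻¹ = 0`), so the
    -- bound rests on the edge `(x₀, y₀)` alone
    have hR := inv_anti₀ hpos (le_effCond_of_mem_pair hw hxy hpair.1 hpair.2)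
    have hR'nonneg : 0 ≤ (effCondContracted w x₀ y₀ x y)⁻¹ :=
      inv_nonneg.2 (effCondContracted_nonneg hw.1)
    linarith
  · have hm := effCondContracted_pos hw hconn hxy hpair
    simpa using inv_anti₀ (by positivity) (inv_add_inv_inv_le_effCond hw hne hpos hxy hm)
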